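/- Let F be a cellular automaton with radius r > 0. The following conditions are equivalent: (1) F is not sensitive; (2) F has an r-blocking word; (3) F has at least one equicontinuity point. -/

import Mathlib

open Function Set

/-- The configuration space `A^ℤ`. -/
abbrev Config (A : Type*) : Type _ := ℤ → A

/-- The shift map `σ(x)_i = x_{i+1}`. -/
def shift {A : Type*} (x : Config A) : Config A := fun i => x (i + 1)

/-- A cellular automaton: a continuous self-map of `A^ℤ` commuting with the shift. -/
def IsCA {A : Type*} [TopologicalSpace A] (F : Config A → Config A) : Prop :=
  Continuous F ∧ F ∘ shift = shift ∘ F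

/-- `F` has radius `r`: `F(x)_i` only depends on `x(i−r, i+r)`. -/
def HasRadius {A : Type*} (F : Config A → Config A) (r : ℕ) : Prop :=
  ∀ (x y : Config A) (i : ℤ),
    (∀ k : ℤ, i - r ≤ k → k ≤ i + r → x k = y k) → F x i = F y i

/-- The cylinder `[u]_l` of the word `u` at position `l`. -/
def cyl {A : Type*} (u : List A) (l : ℤ) : Set (Config A) :=
  {x | ∀ (k : ℕ) (hk : k < u.length), x (l + (k : ℤ)) = u.get ⟨k, hk⟩}

/-- `x` is an equicontinuity point of `F`. -/
def EquicontinuousPt {A : Type*} (F : Config A → Config A) (x : Config A) : Prop :=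
  ∀ m : ℕ, ∃ n : ℕ, ∀ y : Config A,
    (∀ k : ℤ, -(n : ℤ) ≤ k → k ≤ (n : ℤ) → y k = x k) →
    ∀ (t : ℕ) (k : ℤ), -(m : ℤ) ≤ k → k ≤ (m : ℤ) → F^[t] y k = F^[t] x k

/-- `F` is sensitive (to initial conditions). -/
def Sensitive {A : Type*} (F : Config A → Config A) : Prop :=
  ∃ m : ℕ, ∀ x : Config A, ∀ n : ℕ, ∃ y : Config A,
    (∀ k : ℤ, -(n : ℤ) ≤ k → k ≤ (n : ℤ) → y k = x k) ∧
    ∃ (t : ℕ) (k : ℤ), -(m : ℤ) ≤ k ∧ k ≤ (m : ℤ) ∧ F^[t] y k ≠ F^[t] x k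

/-- `w` is an `s`-blocking word for `F`. -/
def IsBlockingWord {A : Type*} (F : Config A → Config A) (s : ℕ) (w : List A) : Prop :=
  s ≤ w.length ∧ ∃ p : ℕ, p ≤ w.length - s ∧
    ∀ x ∈ cyl w (0 : ℤ), ∀ y ∈ cyl w (0 : ℤ), ∀ (n : ℕ) (k : ℤ),
      (p : ℤ) ≤ k → k ≤ (p : ℤ) + (s : ℤ) → F^[n] x k = F^[n] y k

namespace CAaux
variable {A : Type*}

def tr (a : ℤ) (x : Config A) : Config A := fun k => x (k + a)

theorem tr_natSucc (n : ℕ) (x : Config A) : tr (n + 1 : ℕ) x = shift (tr (n : ℤ) x) := by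
  funext k
  show x (k + ((n : ℤ) + 1)) = x (k + 1 + n)
  congr 1; ring

theorem F_trNat {F : Config A → Config A} (hc : F ∘ shift = shift ∘ F)
    (n : ℕ) (x : Config A) (k : ℤ) : F (tr (n : ℤ) x) k = F x (k + n) := by
  induction n generalizing k with
  | zero =>
    have h : tr (0 : ℤ) x = x := funext fun k => by show x (k + 0) = x k; rw [add_zero]
    simp only [Nat.cast_zero]
    rw [h, add_zero]
  | succ n ih =>
    have h1 : F (shift (tr (n : ℤ) x)) = shift (F (tr (n : ℤ) x)) := congrFun hc (tr (n : ℤ) x)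
    have h2 : F (tr ((n : ℕ) + 1 : ℕ) x) k = F (tr (n : ℤ) x) (k + 1) := by
      rw [tr_natSucc]; exact congrFun h1 k
    push_cast
    push_cast at h2
    rw [h2, ih]
    congr 1; ring

theorem F_tr {F : Config A → Config A} (hc : F ∘ shift = shift ∘ F)
    (a : ℤ) (x : Config A) (k : ℤ) : F (tr a x) k = F x (k + a) := by
  cases a with
  | ofNat n => exact F_trNat hc n x k
  | negSucc n =>
    set y := tr (Int.negSucc n) x with hy
    have hx : tr ((n + 1 : ℕ) : ℤ) y = x := by
      funext j
      simp only [hy, tr, Int.negSucc_eq]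
      congr 1
      push_cast
      ring
    have := F_trNat hc (n + 1) y (k + Int.negSucc n)
    rw [hx] at this
    have harg : k + Int.negSucc n + ((n : ℕ) + 1 : ℕ) = k := by
      rw [Int.negSucc_eq]; push_cast; ring
    rw [harg] at this
    exact this.symm

theorem Ft_tr {F : Config A → Config A} (hc : F ∘ shift = shift ∘ F)
    (t : ℕ) (a : ℤ) (x : Config A) (k : ℤ) : F^[t] (tr a x) k = F^[t] x (k + a) := by
  induction t generalizing x k with
  | zero => rfl
  | succ t ih =>
    have h : F (tr a x) = tr a (F x) := funext fun k => F_tr hc a x k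
    rw [Function.iterate_succ_apply, Function.iterate_succ_apply, h, ih]

theorem block_at {F : Config A → Config A} (hc : F ∘ shift = shift ∘ F)
    {r : ℕ} {w : List A} {p : ℕ}
    (hblock : ∀ x ∈ cyl w (0 : ℤ), ∀ y ∈ cyl w (0 : ℤ), ∀ (n : ℕ) (k : ℤ),
      (p : ℤ) ≤ k → k ≤ (p : ℤ) + (r : ℤ) → F^[n] x k = F^[n] y k)
    (a : ℤ) {x y : Config A}
    (hxa : ∀ (j : ℕ) (hj : j < w.length), x (a + j) = w.get ⟨j, hj⟩)
    (hya : ∀ (j : ℕ) (hj : j < w.length), y (a + j) = w.get ⟨j, hj⟩)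
    (t : ℕ) (k : ℤ) (h1 : a + p ≤ k) (h2 : k ≤ a + p + r) :
    F^[t] x k = F^[t] y k := by
  have hxc : tr a x ∈ cyl w (0 : ℤ) := by
    intro j hj
    show x (0 + (j : ℤ) + a) = _
    rw [show (0 : ℤ) + (j : ℤ) + a = a + j by ring]
    exact hxa j hj
  have hyc : tr a y ∈ cyl w (0 : ℤ) := by
    intro j hj
    show y (0 + (j : ℤ) + a) = _
    rw [show (0 : ℤ) + (j : ℤ) + a = a + j by ring]
    exact hya j hj
  have := hblock _ hxc _ hyc t (k - a) (by omega) (by omega)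
  rw [Ft_tr hc, Ft_tr hc] at this
  rw [show k - a + a = k by ring] at this
  exact this

theorem glue {F : Config A → Config A} (hc : F ∘ shift = shift ∘ F)
    {r : ℕ} (hrad : HasRadius F r)
    {w : List A} {p : ℕ} (hlen : r ≤ w.length) (hp : p ≤ w.length - r)
    (hblock : ∀ x ∈ cyl w (0 : ℤ), ∀ y ∈ cyl w (0 : ℤ), ∀ (n : ℕ) (k : ℤ),
      (p : ℤ) ≤ k → k ≤ (p : ℤ) + (r : ℤ) → F^[n] x k = F^[n] y k)
    {a b : ℤ} (hab : a ≤ b) {x y : Config A}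
    (hxa : ∀ (j : ℕ) (hj : j < w.length), x (a + j) = w.get ⟨j, hj⟩)
    (hxb : ∀ (j : ℕ) (hj : j < w.length), x (b + j) = w.get ⟨j, hj⟩)
    (hagree : ∀ k : ℤ, a ≤ k → k ≤ b + w.length → y k = x k) :
    ∀ (t : ℕ) (k : ℤ), a + p ≤ k → k ≤ b + p + r → F^[t] x k = F^[t] y k := by
  have hpr : p + r ≤ w.length := by omega
  have hya : ∀ (j : ℕ) (hj : j < w.length), y (a + j) = w.get ⟨j, hj⟩ := by
    intro j hj
    rw [hagree (a + j) (by omega) (by omega)]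
    exact hxa j hj
  have hyb : ∀ (j : ℕ) (hj : j < w.length), y (b + j) = w.get ⟨j, hj⟩ := by
    intro j hj
    rw [hagree (b + j) (by omega) (by omega)]
    exact hxb j hj
  intro t
  induction t with
  | zero =>
    intro k hk1 hk2
    exact (hagree k (by omega) (by omega)).symm
  | succ t ih =>
    intro k hk1 hk2
    by_cases hL : k ≤ a + p + r
    · exact block_at hc hblock a hxa hya (t + 1) k hk1 hL
    · by_cases hR : b + (p : ℤ) ≤ k
      · exact block_at hc hblock b hxb hyb (t + 1) k hR (by omega)
      · rw [Function.iterate_succ_apply', Function.iterate_succ_apply']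
        apply hrad
        intro j hj1 hj2
        exact ih j (by omega) (by omega)

theorem get_eq_of_idx {A : Type*} {l : List A} {i j : ℕ} (hi : i < l.length)
    (hj : j < l.length) (h : i = j) : l.get ⟨i, hi⟩ = l.get ⟨j, hj⟩ := by
  subst h; rfl

theorem equicont_of_blocking {A : Type*} {F : Config A → Config A}
    (hc : F ∘ shift = shift ∘ F) {r : ℕ} (hr : 0 < r) (hrad : HasRadius F r)
    {w : List A} (hw : IsBlockingWord F r w) :
    ∃ x : Config A, EquicontinuousPt F x := by
  obtain ⟨hlen, p, hp, hblock⟩ := hw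
  have hL1 : 1 ≤ w.length := le_trans hr hlen
  have hbound : ∀ k : ℤ, (k % (w.length : ℤ)).toNat < w.length := by
    intro k
    have h1 : 0 ≤ k % (w.length : ℤ) := Int.emod_nonneg _ (by omega)
    have h2 : k % (w.length : ℤ) < (w.length : ℤ) := Int.emod_lt_of_pos _ (by omega)
    omega
  refine ⟨fun k => w.get ⟨(k % (w.length : ℤ)).toNat, hbound k⟩, ?_⟩
  set L := w.length with hL
  set x₀ : Config A := fun k => w.get ⟨(k % (L : ℤ)).toNat, hbound k⟩ with hx₀
  have hLZ : (1 : ℤ) ≤ (L : ℤ) := by exact_mod_cast hL1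
  have hocc : ∀ (c : ℤ) (j : ℕ) (hj : j < L), x₀ (c * L + j) = w.get ⟨j, hj⟩ := by
    intro c j hj
    have hmod : (c * (L : ℤ) + j) % (L : ℤ) = j := by
      rw [add_comm, mul_comm, Int.add_mul_emod_self_left]
      exact Int.emod_eq_of_lt (by positivity) (by exact_mod_cast hj)
    exact get_eq_of_idx _ _ (by omega)
  intro m
  refine ⟨(m + p + 2) * L, ?_⟩
  intro y hy
  set a : ℤ := (-(m + p + 1 : ℤ)) * L with ha
  set b : ℤ := (m : ℤ) * L with hb
  have hab : a ≤ b := by nlinarith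
  have hagree : ∀ k : ℤ, a ≤ k → k ≤ b + w.length → y k = x₀ k := by
    intro k h1 h2
    apply hy
    · push_cast
      nlinarith
    · push_cast
      nlinarith
  have key := glue hc hrad hlen hp hblock hab (hocc (-(m + p + 1 : ℤ))) (hocc (m : ℤ)) hagree
  intro t k hk1 hk2
  have ha1 : a + p ≤ -(m : ℤ) := by nlinarith
  have hb1 : (m : ℤ) ≤ b + p + r := by nlinarith
  exact (key t k (by omega) (by omega)).symm

theorem blocking_of_not_sensitive {A : Type*} {F : Config A → Config A}
    (hc : F ∘ shift = shift ∘ F) {r : ℕ} (hr : 0 < r) (hns : ¬ Sensitive F) :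
    ∃ w : List A, IsBlockingWord F r w := by
  rw [Sensitive] at hns
  push_neg at hns
  obtain ⟨x, n, hx⟩ := hns r
  set n' := max n r with hn'
  have hrn' : r ≤ n' := le_max_right _ _
  have hnn' : n ≤ n' := le_max_left _ _
  set w : List A := List.ofFn (fun j : Fin (2 * n' + 1) => x ((j : ℤ) - n')) with hw
  have hwlen : w.length = 2 * n' + 1 := List.length_ofFn
  have hagree : ∀ u ∈ cyl w (0 : ℤ), ∀ k : ℤ, -(n' : ℤ) ≤ k → k ≤ (n' : ℤ) →
      tr (n' : ℤ) u k = x k := by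
    intro u hu k h1 h2
    have hj : (k + n').toNat < w.length := by omega
    have := hu (k + n').toNat hj
    show u (k + (n' : ℤ)) = x k
    rw [show k + (n' : ℤ) = 0 + (((k + (n' : ℤ)).toNat : ℕ) : ℤ) by omega, this]
    simp only [hw, List.get_eq_getElem, List.getElem_ofFn]
    congr 1
    omega
  refine ⟨w, by omega, n' - r, by omega, ?_⟩
  intro u hu v hv t k hk1 hk2
  have hu' := hx (tr (n' : ℤ) u)
    (fun k h1 h2 => hagree u hu k (by omega) (by omega)) t (k - n') (by omega) (by omega)
  have hv' := hx (tr (n' : ℤ) v)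
    (fun k h1 h2 => hagree v hv k (by omega) (by omega)) t (k - n') (by omega) (by omega)
  have h1 := Ft_tr hc t (n' : ℤ) u (k - n')
  have h2 := Ft_tr hc t (n' : ℤ) v (k - n')
  rw [show k - (n' : ℤ) + n' = k by ring] at h1 h2
  rw [← h1, ← h2, hu', hv']

theorem not_sensitive_of_equicont {A : Type*} {F : Config A → Config A}
    {x : Config A} (hx : EquicontinuousPt F x) : ¬ Sensitive F := by
  rintro ⟨m, hm⟩
  obtain ⟨n, hn⟩ := hx m
  obtain ⟨y, hy, t, k, hk1, hk2, hne⟩ := hm x n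
  exact hne (hn y hy t k hk1 hk2)

end CAaux

theorem not_sensitive_iff_blocking_iff_equicontinuity_point
    {A : Type} [Fintype A] [Nonempty A] [TopologicalSpace A] [DiscreteTopology A]
    (F : Config A → Config A) (hF : IsCA F) (r : ℕ) (hr : 0 < r)
    (hrad : HasRadius F r) :
    (¬ Sensitive F ↔ ∃ w : List A, IsBlockingWord F r w) ∧
    (¬ Sensitive F ↔ ∃ x : Config A, EquicontinuousPt F x) := by
  obtain ⟨hcont, hc⟩ := hF
  have lemA : ¬ Sensitive F → ∃ w : List A, IsBlockingWord F r w :=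
    fun hns => CAaux.blocking_of_not_sensitive hc hr hns
  have lemB : (∃ w : List A, IsBlockingWord F r w) → ∃ x : Config A, EquicontinuousPt F x :=
    fun ⟨w, hw⟩ => CAaux.equicont_of_blocking hc hr hrad hw
  have lemC : (∃ x : Config A, EquicontinuousPt F x) → ¬ Sensitive F :=
    fun ⟨x, hx⟩ => CAaux.not_sensitive_of_equicont hx
  exact ⟨⟨lemA, fun hw => lemC (lemB hw)⟩, ⟨fun h => lemB (lemA h), lemC⟩⟩
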